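/- arXiv:0902.3482 — 3 statements merged into one kernel-verified Lean document; each statement's English description precedes it below -/
import Mathlib

section
/- The determinant of an n×n matrix of n² independent indeterminates is an irreducible polynomial over any field K (for n ≥ 1), since it is linear (degree at most 1) in each variable. -/
/-!
Substituting `T * X i j` for the variables of one row (or one column) multiplies the determinant
by `T`, so `det` has degree one in the variables of each row and of each column. Hence in a
factorization `det = f * g` the variables of a given row or column occur in only one factor.
If both factors involve some variable, say `X a b` in `f` and `X c d` in `g`, then row `a` belongs
to `f` and column `d` to `g`, so `X a d`, which occurs in `det`, occurs in neither factor.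
-/

namespace MvPolynomial

variable {σ R : Type*} [CommRing R]

/-- `p ↦ p(T ^ w i * X i)`; its degree in `T` is the `w`-weighted degree of `p`. -/
noncomputable def weightedScale (w : σ → ℕ) :
    MvPolynomial σ R →ₐ[R] Polynomial (MvPolynomial σ R) :=
  aeval fun i => Polynomial.C (X i) * Polynomial.X ^ w i

variable {w : σ → ℕ}

theorem eval_one_weightedScale (p : MvPolynomial σ R) : (weightedScale w p).eval 1 = p := by
  induction p using MvPolynomial.induction_on <;> simp_all [weightedScale]

theorem eval_zero_weightedScale (p : MvPolynomial σ R) :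
    (weightedScale w p).eval 0 = bind₁ (fun i => if w i = 0 then X i else 0) p := by
  induction p using MvPolynomial.induction_on <;> simp_all [weightedScale, zero_pow_eq]

theorem weightedScale_injective : Function.Injective (weightedScale (R := R) w) :=
  Function.LeftInverse.injective eval_one_weightedScale

theorem weight_eq_zero_of_natDegree_weightedScale_eq_zero {p : MvPolynomial σ R}
    (h : (weightedScale w p).natDegree = 0) {i : σ} (hi : i ∈ p.vars) : w i = 0 := by
  classical
  obtain ⟨c, hc⟩ := Polynomial.natDegree_eq_zero.mp h
  have hp : bind₁ (fun i => if w i = 0 then X i else 0) p = p := by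
    have h0 := eval_zero_weightedScale (w := w) p
    have h1 := eval_one_weightedScale (w := w) p
    rw [← hc, Polynomial.eval_C] at h0 h1
    exact h0.symm.trans h1
  rw [← hp] at hi
  obtain ⟨j, -, hj⟩ := mem_vars_bind₁ _ p hi
  split_ifs at hj with hwj
  · rw [vars_def, Multiset.mem_toFinset] at hj
    rwa [Multiset.mem_singleton.mp (Multiset.mem_of_le (degrees_X' j) hj)]
  · simp at hj

theorem weight_eq_zero_or_of_natDegree_weightedScale_mul_le_one [IsDomain R]
    {f g : MvPolynomial σ R} (hfg : f * g ≠ 0) (h : (weightedScale w (f * g)).natDegree ≤ 1) :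
    (∀ i ∈ f.vars, w i = 0) ∨ (∀ i ∈ g.vars, w i = 0) := by
  have hf := (map_ne_zero_iff _ (weightedScale_injective (w := w))).2 (left_ne_zero_of_mul hfg)
  have hg := (map_ne_zero_iff _ (weightedScale_injective (w := w))).2 (right_ne_zero_of_mul hfg)
  rw [map_mul, Polynomial.natDegree_mul hf hg] at h
  rcases Nat.eq_zero_or_pos (weightedScale w f).natDegree with hf0 | hf0
  · exact .inl fun i => weight_eq_zero_of_natDegree_weightedScale_eq_zero hf0
  · exact .inr fun i => weight_eq_zero_of_natDegree_weightedScale_eq_zero (by omega)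

theorem vars_nonempty_iff_not_isUnit {K : Type*} [Field K] {p : MvPolynomial σ K} (hp : p ≠ 0) :
    p.vars.Nonempty ↔ ¬IsUnit p := by
  rw [Finset.nonempty_iff_ne_empty, not_iff_not, isUnit_iff_eq_C_of_isReduced]
  constructor
  · intro h
    rw [vars_eq_empty_iff_eq_C] at h
    exact ⟨_, isUnit_iff_ne_zero.2 fun h0 => hp (by rw [h, h0, C_0]), h⟩
  · rintro ⟨r, -, rfl⟩
    exact vars_C

end MvPolynomial

namespace Matrix

open MvPolynomial

variable {m R : Type*} [Fintype m] [DecidableEq m] [CommRing R]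

theorem weightedScale_det_mvPolynomialX (r c : m → ℕ) :
    weightedScale (fun q => r q.1 + c q.2) (det (mvPolynomialX m m R)) =
      Polynomial.X ^ (∑ i, r i + ∑ j, c j) * Polynomial.C (det (mvPolynomialX m m R)) := by
  have hmap : (mvPolynomialX m m R).map (weightedScale fun q => r q.1 + c q.2) =
      diagonal (fun i => Polynomial.X ^ r i) * (mvPolynomialX m m R).map Polynomial.C *
        diagonal (fun j => Polynomial.X ^ c j) := by
    refine Matrix.ext fun i j => ?_
    simp only [map_apply, mvPolynomialX_apply, weightedScale, aeval_X, diagonal_mul, mul_diagonal,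
      pow_add]
    ring
  have hC := Polynomial.C.map_det (mvPolynomialX m m R)
  rw [RingHom.mapMatrix_apply] at hC
  rw [AlgHom.map_det, AlgHom.mapMatrix_apply, hmap, det_mul, det_mul, det_diagonal, det_diagonal,
    hC, Finset.prod_pow_eq_pow_sum, Finset.prod_pow_eq_pow_sum, pow_add]
  ring

theorem mem_vars_det_mvPolynomialX [Nontrivial R] (q : m × m) :
    q ∈ (det (mvPolynomialX m m R)).vars := by
  by_contra hq
  -- Column `q.2` of `P` has its only nonzero entry at `q`; zeroing it turns `det P = ±1` into `0`.
  set P := (Equiv.swap q.1 q.2).permMatrix R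
  have hP : ∀ i, P i q.2 = if i = q.1 then 1 else 0 := by
    intro i
    simp [P, Equiv.Perm.permMatrix, PEquiv.toMatrix_apply, Equiv.swap_apply_eq_iff]
  have hcongr : eval (fun p => P p.1 p.2) (det (mvPolynomialX m m R)) =
      eval (Function.update (fun p => P p.1 p.2) q 0) (det (mvPolynomialX m m R)) :=
    eval₂Hom_congr' rfl (fun p hp _ =>
      (Function.update_of_ne (ne_of_mem_of_not_mem hp hq) (0 : R) (fun p => P p.1 p.2)).symm) rfl
  rw [eval_det_mvPolynomialX, eval_det_mvPolynomialX] at hcongr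
  have hdetP : det P ≠ 0 := by
    rw [det_permutation]
    exact (Equiv.Perm.sign _).isUnit.map (Int.castRingHom R) |>.ne_zero
  refine hdetP (hcongr.trans (det_eq_zero_of_column_eq_zero q.2 fun i => ?_))
  by_cases hi : i = q.1
  · simp [hi]
  · rw [of_apply, Function.update_of_ne (fun h => hi (congrArg Prod.fst h)), hP, if_neg hi]

variable [IsDomain R] {f g : MvPolynomial (m × m) R}

theorem weight_eq_zero_or_of_det_eq_mul (hfg : det (mvPolynomialX m m R) = f * g)
    {r c : m → ℕ} (hrc : ∑ i, r i + ∑ j, c j ≤ 1) :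
    (∀ q ∈ f.vars, r q.1 + c q.2 = 0) ∨ (∀ q ∈ g.vars, r q.1 + c q.2 = 0) := by
  refine weight_eq_zero_or_of_natDegree_weightedScale_mul_le_one
    (hfg ▸ det_mvPolynomialX_ne_zero m R) ?_
  rw [← hfg, weightedScale_det_mvPolynomialX, mul_comm]
  exact (Polynomial.natDegree_C_mul_X_pow_le _ _).trans hrc

theorem fst_ne_of_mem_vars_or_of_det_eq_mul (hfg : det (mvPolynomialX m m R) = f * g) (i : m) :
    (∀ q ∈ f.vars, q.1 ≠ i) ∨ (∀ q ∈ g.vars, q.1 ≠ i) := by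
  simpa [Pi.single_apply] using weight_eq_zero_or_of_det_eq_mul hfg (r := Pi.single i 1) (c := 0)
    (by simp)

theorem snd_ne_of_mem_vars_or_of_det_eq_mul (hfg : det (mvPolynomialX m m R) = f * g) (j : m) :
    (∀ q ∈ f.vars, q.2 ≠ j) ∨ (∀ q ∈ g.vars, q.2 ≠ j) := by
  simpa [Pi.single_apply] using weight_eq_zero_or_of_det_eq_mul hfg (r := 0) (c := Pi.single j 1)
    (by simp)

theorem irreducible_det_mvPolynomialX (K : Type*) [Field K] [Nonempty m] :
    Irreducible (det (mvPolynomialX m m K)) := by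
  have hdet := det_mvPolynomialX_ne_zero m K
  refine ⟨(vars_nonempty_iff_not_isUnit hdet).1
    ⟨_, mem_vars_det_mvPolynomialX (Classical.arbitrary _)⟩, fun f g hfg => ?_⟩
  by_contra! ⟨hf, hg⟩
  rw [hfg] at hdet
  obtain ⟨⟨a, b⟩, hab⟩ := (vars_nonempty_iff_not_isUnit (left_ne_zero_of_mul hdet)).2 hf
  obtain ⟨⟨c, d⟩, hcd⟩ := (vars_nonempty_iff_not_isUnit (right_ne_zero_of_mul hdet)).2 hg
  have hg_row : ∀ q ∈ g.vars, q.1 ≠ a :=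
    (fst_ne_of_mem_vars_or_of_det_eq_mul hfg a).resolve_left fun h => h _ hab rfl
  have hf_col : ∀ q ∈ f.vars, q.2 ≠ d :=
    (snd_ne_of_mem_vars_or_of_det_eq_mul hfg d).resolve_right fun h => h _ hcd rfl
  rcases Finset.mem_union.1 (vars_mul f g (hfg ▸ mem_vars_det_mvPolynomialX (a, d))) with h | h
  · exact hf_col _ h rfl
  · exact hg_row _ h rfl

end Matrix

/-- The determinant of the generic `n × n` matrix of `n²` independent
indeterminates is an irreducible polynomial over any field `K`, for `n ≥ 1`. -/
theorem det_generic_matrix_irreducible (K : Type*) [Field K] (n : ℕ) (hn : 1 ≤ n) :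
    Irreducible
      (Matrix.det (Matrix.of fun i j : Fin n =>
        (MvPolynomial.X (i, j) : MvPolynomial (Fin n × Fin n) K))) :=
  have : Nonempty (Fin n) := ⟨⟨0, hn⟩⟩
  Matrix.irreducible_det_mvPolynomialX K
end

section
/- Let F_q be a finite field, n ≥ 2, U, V ∈ M_n(F_q) with at least one of U, V nonzero, and H ∈ GL_n(F_q). Then the number of matrices X ∈ GL_n(F_q) satisfying both U·X = 0 and V·(HX⁻¹) = 0 is at most q^{n²−1}. -/
open Finset

/-- The linear functional `X ↦ ∑ U i j * X i j`. -/
def dotLin {F : Type*} [Field F] {n : ℕ} (U : Matrix (Fin n) (Fin n) F) :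
    Matrix (Fin n) (Fin n) F →ₗ[F] F where
  toFun X := ∑ i, ∑ j, U i j * X i j
  map_add' X Y := by
    simp [Matrix.add_apply, mul_add, Finset.sum_add_distrib]
  map_smul' c X := by
    simp [Matrix.smul_apply, Finset.mul_sum, mul_left_comm]

lemma dotLin_ne_zero {F : Type*} [Field F] {n : ℕ} {U : Matrix (Fin n) (Fin n) F}
    (hU : U ≠ 0) : dotLin U ≠ 0 := by
  obtain ⟨i, j, hij⟩ : ∃ i j, U i j ≠ 0 := by
    by_contra h
    push_neg at h
    exact hU (by ext i j; simp [h])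
  intro h
  have := congrFun (congrArg DFunLike.coe h) (Matrix.single i j 1)
  simp only [dotLin, LinearMap.coe_mk, AddHom.coe_mk, LinearMap.zero_apply] at this
  rw [Finset.sum_eq_single i, Finset.sum_eq_single j] at this
  · simp [Matrix.single] at this
    exact hij this
  · intro b _ hb
    simp only [Matrix.single, Matrix.of_apply, mul_ite, mul_one, mul_zero]
    rw [if_neg (by tauto)]
  · simp
  · intro b _ hb; apply Finset.sum_eq_zero; intro c _
    simp only [Matrix.single, Matrix.of_apply, mul_ite, mul_one, mul_zero]
    rw [if_neg (by tauto)]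
  · simp

lemma card_ker_dotLin {F : Type*} [Field F] [Fintype F] [DecidableEq F] {n : ℕ}
    {U : Matrix (Fin n) (Fin n) F} (hU : U ≠ 0) :
    Nat.card (LinearMap.ker (dotLin U)) = Fintype.card F ^ (n ^ 2 - 1) := by
  classical
  haveI : Fintype (LinearMap.ker (dotLin U)) := Fintype.ofFinite _
  have hsurj : Function.Surjective (dotLin U) :=
    LinearMap.surjective_of_ne_zero (dotLin_ne_zero hU)
  have hrank : Module.finrank F (LinearMap.ker (dotLin U)) = n ^ 2 - 1 := by
    have h1 := LinearMap.finrank_range_add_finrank_ker (dotLin U)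
    rw [LinearMap.range_eq_top.2 hsurj] at h1
    have h2 : Module.finrank F (Matrix (Fin n) (Fin n) F) = n ^ 2 := by
      simp [Module.finrank_matrix, sq]
    simp only [finrank_top, Module.finrank_self] at h1
    omega
  rw [Nat.card_eq_fintype_card, Module.card_eq_pow_finrank (K := F), hrank]

/-- For `U, V ∈ M_n(F_q)` not both zero and `H ∈ GL_n(F_q)`, the number of
`X ∈ GL_n(F_q)` with `U·X = 0` and `V·(HX⁻¹) = 0` is at most `q^{n^2-1}`. -/
theorem card_GL_both_dot_zero_le (F : Type*) [Field F] [Fintype F] [DecidableEq F]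
    (n : ℕ) (hn : 2 ≤ n) (U V : Matrix (Fin n) (Fin n) F) (hUV : U ≠ 0 ∨ V ≠ 0)
    (H : GL (Fin n) F) :
    Nat.card {X : GL (Fin n) F //
        (∑ i, ∑ j, U i j * (X : Matrix (Fin n) (Fin n) F) i j) = 0 ∧
        (∑ i, ∑ j, V i j * ((H : Matrix (Fin n) (Fin n) F) *
            (↑(X⁻¹) : Matrix (Fin n) (Fin n) F)) i j) = 0} ≤
      (Fintype.card F) ^ (n ^ 2 - 1) := by
  rcases hUV with hU | hV
  · rw [← card_ker_dotLin hU]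
    apply Nat.card_le_card_of_injective
      (fun X => ⟨(X.1 : Matrix (Fin n) (Fin n) F), by
        simpa [dotLin, LinearMap.mem_ker] using X.2.1⟩)
    intro X Y h
    simp only [Subtype.mk.injEq] at h
    exact Subtype.ext (Units.ext h)
  · rw [← card_ker_dotLin hV]
    apply Nat.card_le_card_of_injective
      (fun X => ⟨(H : Matrix (Fin n) (Fin n) F) * (↑(X.1⁻¹) : Matrix (Fin n) (Fin n) F), by
        simpa [dotLin, LinearMap.mem_ker] using X.2.2⟩)
    intro X Y h
    simp only [Subtype.mk.injEq] at h
    have h2 : H * X.1⁻¹ = H * Y.1⁻¹ := Units.ext (by simpa [Units.val_mul] using h)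
    exact Subtype.ext (inv_injective (mul_left_cancel h2))
end

section
/- Let F_q be a finite field, n ≥ 2, and let 𝒜, ℬ ⊆ M_n(F_q) satisfy #𝒜 · #ℬ > C² q^{4n²−4} for the constant C in the bound |T(𝒜,ℬ) − #SL_n(F_q)·#𝒜·#ℬ/q^{n²}| ≤ C q^{n²−2}√(#𝒜·#ℬ). Then there exist A ∈ 𝒜 and B ∈ ℬ with det(A+B) = 1. -/
open Finset

/-- If `#𝒜 · #ℬ > C² q^{4n²-4}`, where `C` is the constant in the bound
`|T(𝒜,ℬ) - #SL_n(F_q)·#𝒜·#ℬ/q^{n²}| ≤ C q^{n²-2} √(#𝒜·#ℬ)` for the number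
`T(𝒜,ℬ)` of pairs `(A,B) ∈ 𝒜 × ℬ` with `det(A+B) = 1`, then there exist
`A ∈ 𝒜`, `B ∈ ℬ` with `det(A+B) = 1`. -/
theorem exists_sum_in_SL (F : Type*) [Field F] [Fintype F] [DecidableEq F]
    (n : ℕ) (hn : 2 ≤ n) (C : ℝ)
    (𝒜 ℬ : Finset (Matrix (Fin n) (Fin n) F))
    (hT : |(((𝒜 ×ˢ ℬ).filter (fun AB => (AB.1 + AB.2).det = 1)).card : ℝ) -
        (Nat.card {X : Matrix (Fin n) (Fin n) F // X.det = 1} : ℝ) *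
          𝒜.card * ℬ.card / (Fintype.card F : ℝ) ^ (n ^ 2)| ≤
      C * (Fintype.card F : ℝ) ^ (n ^ 2 - 2) * Real.sqrt (𝒜.card * ℬ.card))
    (hsize : (𝒜.card : ℝ) * ℬ.card >
      C ^ 2 * (Fintype.card F : ℝ) ^ (4 * n ^ 2 - 4)) :
    ∃ A ∈ 𝒜, ∃ B ∈ ℬ, (A + B).det = 1 := by
  set q : ℝ := (Fintype.card F : ℝ) with hq
  have hq1 : (1 : ℝ) ≤ q := by
    have : 1 ≤ Fintype.card F := Fintype.card_pos
    rw [hq]; exact_mod_cast this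
  set N : ℝ := (Nat.card {X : Matrix (Fin n) (Fin n) F // X.det = 1} : ℝ) with hNdef
  have hN : (1 : ℝ) ≤ N := by
    have hpos : 0 < Nat.card {X : Matrix (Fin n) (Fin n) F // X.det = 1} := by
      have : Nonempty {X : Matrix (Fin n) (Fin n) F // X.det = 1} :=
        ⟨⟨1, Matrix.det_one⟩⟩
      exact Nat.card_pos
    have : 1 ≤ Nat.card {X : Matrix (Fin n) (Fin n) F // X.det = 1} := hpos
    rw [hNdef]; exact_mod_cast this
  set P : ℝ := q ^ (n ^ 2 - 2) with hP
  set Q : ℝ := q ^ (n ^ 2) with hQ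
  have hPpos : 0 < P := pow_pos (by linarith) _
  have hQpos : 0 < Q := pow_pos (by linarith) _
  have h4 : 4 ≤ n ^ 2 := by nlinarith
  have hE : q ^ (4 * n ^ 2 - 4) = P ^ 2 * Q ^ 2 := by
    rw [hP, hQ, ← pow_mul, ← pow_mul, ← pow_add]
    congr 1
    omega
  set s : ℝ := Real.sqrt (𝒜.card * ℬ.card) with hs
  have hab0 : (0 : ℝ) ≤ (𝒜.card : ℝ) * ℬ.card := by positivity
  have hs2 : s ^ 2 = (𝒜.card : ℝ) * ℬ.card := Real.sq_sqrt hab0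
  have hs0 : 0 ≤ s := Real.sqrt_nonneg _
  have hsize' : s ^ 2 > C ^ 2 * P ^ 2 * Q ^ 2 := by
    rw [hs2]
    calc C ^ 2 * P ^ 2 * Q ^ 2 = C ^ 2 * q ^ (4 * n ^ 2 - 4) := by rw [hE]; ring
    _ < _ := hsize
  have key : C * P * s < N * s ^ 2 / Q := by
    rw [lt_div_iff₀ hQpos]
    nlinarith [sq_nonneg (s - C * P * Q),
      mul_nonneg (by linarith : (0 : ℝ) ≤ N - 1) (sq_nonneg s)]
  have hTpos : (0 : ℝ) <
      (((𝒜 ×ˢ ℬ).filter (fun AB => (AB.1 + AB.2).det = 1)).card : ℝ) := by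
    have h1 := (abs_le.mp hT).1
    have h2 : N * 𝒜.card * ℬ.card / Q = N * s ^ 2 / Q := by
      rw [hs2]; ring_nf
    nlinarith [h1, key, h2]
  have hne : ((𝒜 ×ˢ ℬ).filter (fun AB => (AB.1 + AB.2).det = 1)).Nonempty := by
    rw [← Finset.card_pos]
    exact_mod_cast hTpos
  obtain ⟨⟨A, B⟩, hmem⟩ := hne
  rw [Finset.mem_filter, Finset.mem_product] at hmem
  exact ⟨A, hmem.1.1, B, hmem.1.2, hmem.2⟩
end
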